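/- arXiv:gr-qc/9912019 — 4 statements merged into one kernel-verified Lean document; each statement's English description precedes it below -/
import Mathlib

section
/- For any solution y of y' = -y³ + ε e^{-γτ} with y(0) = y₀ > 0 (ε, γ > 0 constants), there exists a solution Y of the unperturbed equation Y' = -Y³ such that |y(τ) - Y(τ)| = O(e^{-γτ}) as τ → ∞. Explicitly, there is a constant c with y(τ) = 1/(√2 √(τ + c)) + O(e^{-γτ}). -/
/-!
Comparing `y` with the unperturbed solution `Y₀` through `(0, y₀)` gives `0 < Y₀ ≤ y`.
The substitution `z = y⁻²` turns the equation into `z' = 2 - 2ε e^{-γt} / y³`, so `z - 2t`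
decreases. Since `y⁻³ ≤ Y₀⁻³`, for large `t` its derivative is bounded below by that of
`-E`, where `E(t) = (4ε/γ) e^{-γt} / Y₀(t)³`, so `z - 2t - E` increases. A constant `2c`
therefore lies between the two, i.e. `0 ≤ z - 2(t + c) ≤ E`; as `Y_c⁻² = 2(t + c)`, this
gives `|y - Y_c| ≤ E Y_c³ = O(e^{-γt})`.
-/

open Filter Set Real

theorem exists_between_of_monotoneOn_of_antitoneOn {α β : Type*} [LinearOrder α]
    [ConditionallyCompleteLattice β] {s : Set α} {f g : α → β} (hg : MonotoneOn g s)
    (hf : AntitoneOn f s) (hgf : ∀ t ∈ s, g t ≤ f t) :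
    ∃ L, ∀ t ∈ s, g t ≤ L ∧ L ≤ f t := by
  have hle : ∀ u ∈ s, ∀ t ∈ s, g u ≤ f t := by
    intro u hu t ht
    rcases le_total u t with hut | htu
    · exact (hg hu ht hut).trans (hgf t ht)
    · exact (hgf u hu).trans (hf ht hu htu)
  refine ⟨sSup (g '' s), fun t ht => ⟨le_csSup ⟨f t, ?_⟩ (mem_image_of_mem g ht),
    csSup_le (image_nonempty.2 ⟨t, ht⟩) ?_⟩⟩
  · rintro _ ⟨u, hu, rfl⟩; exact hle u hu t ht
  · rintro _ ⟨u, hu, rfl⟩; exact hle u hu t ht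

theorem exists_le_and_le_add_of_hasDerivAt {φ φ' E E' : ℝ → ℝ} {T : ℝ}
    (hφ : ∀ t ∈ Ici T, HasDerivAt φ (φ' t) t) (hE : ∀ t ∈ Ici T, HasDerivAt E (E' t) t)
    (hφ' : ∀ t ∈ Ici T, φ' t ≤ 0) (hE' : ∀ t ∈ Ici T, E' t ≤ φ' t)
    (hE0 : ∀ t ∈ Ici T, 0 ≤ E t) :
    ∃ L, ∀ t ∈ Ici T, L ≤ φ t ∧ φ t ≤ L + E t := by
  have hint : ∀ t ∈ interior (Ici T), t ∈ Ici T := fun _ ht => interior_subset ht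
  have hanti : AntitoneOn φ (Ici T) :=
    antitoneOn_of_hasDerivWithinAt_nonpos (convex_Ici T)
      (fun t ht => (hφ t ht).continuousAt.continuousWithinAt)
      (fun t ht => (hφ t (hint t ht)).hasDerivWithinAt) (fun t ht => hφ' t (hint t ht))
  have hmono : MonotoneOn (fun t => φ t - E t) (Ici T) :=
    monotoneOn_of_hasDerivWithinAt_nonneg (convex_Ici T)
      (fun t ht => ((hφ t ht).sub (hE t ht)).continuousAt.continuousWithinAt)
      (fun t ht => ((hφ t (hint t ht)).sub (hE t (hint t ht))).hasDerivWithinAt)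
      (fun t ht => sub_nonneg.2 (hE' t (hint t ht)))
  obtain ⟨L, hL⟩ := exists_between_of_monotoneOn_of_antitoneOn hmono hanti
    (fun t ht => sub_le_self _ (hE0 t ht))
  exact ⟨L, fun t ht => ⟨(hL t ht).2, sub_le_iff_le_add.1 (hL t ht).1⟩⟩

theorem abs_sub_le_of_inv_sq_le {y Y δ : ℝ} (hy : 0 < y) (hY : 0 < Y)
    (hle : (Y ^ 2)⁻¹ ≤ (y ^ 2)⁻¹) (hδ : (y ^ 2)⁻¹ ≤ (Y ^ 2)⁻¹ + δ) : |y - Y| ≤ δ * Y ^ 3 := by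
  have hyY : y ≤ Y := by
    have := (inv_le_inv₀ (by positivity) (by positivity)).1 hle
    exact (pow_le_pow_iff_left₀ hy.le hY.le two_ne_zero).1 this
  have hsq : Y ^ 2 - y ^ 2 ≤ δ * (y ^ 2 * Y ^ 2) := by
    have : (y ^ 2)⁻¹ - (Y ^ 2)⁻¹ = (Y ^ 2 - y ^ 2) / (y ^ 2 * Y ^ 2) := by
      field_simp
    rw [← div_le_iff₀ (by positivity), ← this]
    linarith
  rw [abs_of_nonpos (sub_nonpos.2 hyY)]
  have hδ0 : 0 ≤ δ := by linarith
  nlinarith [mul_le_mul_of_nonneg_left (pow_le_pow_left₀ hy.le hyY 2)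
    (mul_nonneg hδ0 (sq_nonneg Y))]

noncomputable def cubicSol (c t : ℝ) : ℝ := 1 / (√2 * √(t + c))

section cubicSol
variable {c t : ℝ}

theorem cubicSol_pos (h : 0 < t + c) : 0 < cubicSol c t := by
  unfold cubicSol; positivity

theorem inv_cubicSol_sq (h : 0 < t + c) : (cubicSol c t ^ 2)⁻¹ = 2 * (t + c) := by
  rw [cubicSol, one_div, inv_pow, inv_inv, mul_pow, sq_sqrt zero_le_two, sq_sqrt h.le]

theorem hasDerivAt_cubicSol (h : 0 < t + c) :
    HasDerivAt (cubicSol c) (-cubicSol c t ^ 3) t := by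
  have hsqrt : HasDerivAt (fun s => √2 * √(s + c)) (√2 * (1 / (2 * √(t + c)))) t := by
    simpa using (((hasDerivAt_id t).add_const c).sqrt h.ne').const_mul √2
  have hpos : 0 < √(t + c) := sqrt_pos.2 h
  refine ((hasDerivAt_const t (1 : ℝ)).fun_div hsqrt (by positivity)).congr_deriv ?_
  rw [cubicSol]
  field_simp
  rw [sq_sqrt zero_le_two, sq_sqrt h.le]
  ring

theorem cubicSol_le_two_mul {c' : ℝ} (h : 0 < t + c') (h' : t + c' ≤ 4 * (t + c)) :
    cubicSol c t ≤ 2 * cubicSol c' t := by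
  have hc : 0 < t + c := by linarith
  have hsqrt : √(t + c') ≤ 2 * √(t + c) := by
    rw [show (4 : ℝ) = 2 ^ 2 by norm_num] at h'
    simpa [sqrt_mul', sqrt_sq] using sqrt_le_sqrt h'
  unfold cubicSol
  rw [mul_one_div, div_le_div_iff₀ (by positivity) (by positivity)]
  have := sqrt_pos.2 h
  nlinarith [sqrt_nonneg 2]

theorem cubicSol_inv_sq_div_two_zero {y₀ : ℝ} (hy₀ : 0 < y₀) :
    cubicSol ((y₀ ^ 2)⁻¹ / 2) 0 = y₀ := by
  have h := inv_cubicSol_sq (c := (y₀ ^ 2)⁻¹ / 2) (t := 0) (by positivity)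
  rw [zero_add, mul_div_cancel₀ _ two_ne_zero, inv_inj] at h
  exact (sq_eq_sq₀ (cubicSol_pos (by positivity)).le hy₀.le).1 h

end cubicSol

theorem cubicSol_le_of_hasDerivAt {y h : ℝ → ℝ} {c : ℝ} (hc : 0 < c)
    (hh : ∀ t ∈ Ici (0 : ℝ), 0 < h t)
    (hode : ∀ t ∈ Ici (0 : ℝ), HasDerivAt y (-y t ^ 3 + h t) t) (h0 : cubicSol c 0 ≤ y 0)
    {t : ℝ} (ht : t ∈ Ici (0 : ℝ)) : cubicSol c t ≤ y t := by
  have hY : ∀ s ∈ Ici (0 : ℝ), HasDerivAt (cubicSol c) (-cubicSol c s ^ 3) s :=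
    fun s hs => hasDerivAt_cubicSol (by linarith [hs.out])
  refine image_le_of_deriv_right_lt_deriv_boundary'
    (fun s hs => (hY s hs.1).continuousAt.continuousWithinAt)
    (fun s hs => (hY s hs.1).hasDerivWithinAt) h0
    (fun s hs => (hode s hs.1).continuousAt.continuousWithinAt)
    (fun s hs => (hode s hs.1).hasDerivWithinAt) ?_ ⟨ht, le_rfl⟩
  intro s hs hYy
  rw [hYy]
  linarith [hh s hs.1]

theorem hasDerivAt_inv_sq_sub_two_mul {y : ℝ → ℝ} {h t : ℝ} (hy : y t ≠ 0)
    (hode : HasDerivAt y (-y t ^ 3 + h) t) :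
    HasDerivAt (fun s => (y s ^ 2)⁻¹ - 2 * s) (-2 * h / y t ^ 3) t := by
  refine (((hode.fun_pow 2).fun_inv (pow_ne_zero 2 hy)).sub
    ((hasDerivAt_id t).const_mul 2)).congr_deriv ?_
  field_simp
  ring

theorem hasDerivAt_exp_div_pow_three {Y : ℝ → ℝ} {γ t : ℝ} (hY : Y t ≠ 0)
    (hode : HasDerivAt Y (-Y t ^ 3) t) :
    HasDerivAt (fun s => exp (-γ * s) / Y s ^ 3) (exp (-γ * t) * (3 / Y t - γ / Y t ^ 3)) t := by
  have hexp : HasDerivAt (fun s => exp (-γ * s)) (exp (-γ * t) * -γ) t := by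
    simpa using ((hasDerivAt_id t).const_mul (-γ)).exp
  refine (hexp.fun_div (hode.fun_pow 3) (pow_ne_zero 3 hY)).congr_deriv ?_
  field_simp
  ring

theorem exists_le_inv_sq_sub_two_mul_le {ε γ c₀ : ℝ} {y : ℝ → ℝ} (hε : 0 ≤ ε) (hγ : 0 < γ)
    (hc₀ : 0 < c₀) (hode : ∀ t ∈ Ici (0 : ℝ), HasDerivAt y (-y t ^ 3 + ε * exp (-γ * t)) t)
    (hlower : ∀ t ∈ Ici (0 : ℝ), cubicSol c₀ t ≤ y t) :
    ∃ L, ∀ t ∈ Ici (3 / γ), L ≤ (y t ^ 2)⁻¹ - 2 * t ∧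
      (y t ^ 2)⁻¹ - 2 * t ≤ L + 4 * ε / γ * (exp (-γ * t) / cubicSol c₀ t ^ 3) := by
  have hnonneg : ∀ t ∈ Ici (3 / γ), t ∈ Ici (0 : ℝ) := fun t ht =>
    (div_pos three_pos hγ).le.trans ht
  have hY₀ : ∀ t ∈ Ici (3 / γ), 0 < cubicSol c₀ t := fun t ht =>
    cubicSol_pos (by linarith [(hnonneg t ht).out])
  -- `E = (4ε/γ) e^{-γt} / Y₀³` has `E' ≤ -2ε e^{-γt} / Y₀³` as soon as `6 Y₀² ≤ γ`.
  refine exists_le_and_le_add_of_hasDerivAt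
    (fun t ht => hasDerivAt_inv_sq_sub_two_mul ((hY₀ t ht).trans_le (hlower t (hnonneg t ht))).ne'
      (hode t (hnonneg t ht)))
    (fun t ht => (hasDerivAt_exp_div_pow_three (γ := γ) (hY₀ t ht).ne'
      (hasDerivAt_cubicSol (by linarith [(hnonneg t ht).out]))).const_mul (4 * ε / γ))
    (fun t ht => ?_) (fun t ht => ?_) (fun t ht => by have := hY₀ t ht; positivity)
  · have hy := (hY₀ t ht).trans_le (hlower t (hnonneg t ht))
    rw [neg_mul, neg_div]
    exact neg_nonpos.2 (by positivity)
  · set Y₀ := cubicSol c₀ t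
    have hY₀pos : 0 < Y₀ := hY₀ t ht
    have hsmall : 6 * Y₀ ^ 2 ≤ γ := by
      have h : Y₀ ^ 2 = (2 * (t + c₀))⁻¹ := by
        rw [← inv_cubicSol_sq (by linarith [(hnonneg t ht).out]), inv_inv]
      have hγt : 3 ≤ γ * t := by have := ht.out; rw [div_le_iff₀ hγ] at this; linarith
      rw [h, ← div_eq_mul_inv, div_le_iff₀ (by linarith [(hnonneg t ht).out])]
      nlinarith
    have hcube : (y t ^ 3)⁻¹ ≤ (Y₀ ^ 3)⁻¹ :=
      inv_anti₀ (by positivity) (pow_le_pow_left₀ hY₀pos.le (hlower t (hnonneg t ht)) 3)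
    have key : 4 / γ * (3 / Y₀ - γ / Y₀ ^ 3) ≤ -2 * (Y₀ ^ 3)⁻¹ := by
      have hsplit : 4 / γ * (3 / Y₀ - γ / Y₀ ^ 3)
          = -2 * (Y₀ ^ 3)⁻¹ + 2 / (γ * Y₀ ^ 3) * (6 * Y₀ ^ 2 - γ) := by
        field_simp
        ring
      rw [hsplit]
      linarith [mul_nonpos_of_nonneg_of_nonpos (by positivity : 0 ≤ 2 / (γ * Y₀ ^ 3))
        (sub_nonpos.2 hsmall)]
    calc 4 * ε / γ * (exp (-γ * t) * (3 / Y₀ - γ / Y₀ ^ 3))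
        = ε * exp (-γ * t) * (4 / γ * (3 / Y₀ - γ / Y₀ ^ 3)) := by ring
      _ ≤ ε * exp (-γ * t) * (-2 * (y t ^ 3)⁻¹) :=
        mul_le_mul_of_nonneg_left (key.trans (by linarith)) (by positivity)
      _ = -2 * (ε * exp (-γ * t)) / y t ^ 3 := by ring

/-- Any solution of the perturbed equation `y' = -y³ + ε e^{-γτ}` with `y(0) = y₀ > 0`
is approximated, up to an `O(e^{-γτ})` error, by a solution `Y(τ) = 1/(√2 √(τ+c))`
of the unperturbed equation `Y' = -Y³`. -/
theorem perturbed_cubic_asymptotic (ε γ y₀ : ℝ) (hε : 0 < ε) (hγ : 0 < γ)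
    (hy₀ : 0 < y₀) (y : ℝ → ℝ) (hy0 : y 0 = y₀)
    (hode : ∀ τ ∈ Ici (0:ℝ), HasDerivAt y (-(y τ)^3 + ε * Real.exp (-γ * τ)) τ) :
    ∃ (c : ℝ) (Y : ℝ → ℝ),
      (∀ τ, Y τ = 1 / (Real.sqrt 2 * Real.sqrt (τ + c))) ∧
      (∀ τ > -c, HasDerivAt Y (-(Y τ)^3) τ) ∧
      (fun τ => y τ - Y τ) =O[atTop] (fun τ => Real.exp (-γ * τ)) := by
  set c₀ : ℝ := (y₀ ^ 2)⁻¹ / 2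
  have hc₀ : 0 < c₀ := by positivity
  have hlower : ∀ t ∈ Ici (0 : ℝ), cubicSol c₀ t ≤ y t := fun t ht =>
    cubicSol_le_of_hasDerivAt (h := fun s => ε * exp (-γ * s)) hc₀
      (fun s _ => by positivity) hode (by rw [cubicSol_inv_sq_div_two_zero hy₀, hy0]) ht
  obtain ⟨L, hL⟩ := exists_le_inv_sq_sub_two_mul_le hε.le hγ hc₀ hode hlower
  refine ⟨L / 2, cubicSol (L / 2), fun _ => rfl,
    fun τ hτ => hasDerivAt_cubicSol (by linarith), ?_⟩
  refine Asymptotics.IsBigO.of_bound (32 * ε / γ) ?_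
  filter_upwards [eventually_ge_atTop (3 / γ), eventually_gt_atTop (-(L / 2)),
    eventually_ge_atTop ((c₀ - 2 * L) / 3)] with t hT hc hratio
  have ht : 0 ≤ t := (div_pos three_pos hγ).le.trans hT
  set Y₀ := cubicSol c₀ t
  set Y := cubicSol (L / 2) t
  have hY : 0 < Y := cubicSol_pos (by linarith)
  have hY₀ : 0 < Y₀ := cubicSol_pos (by linarith)
  have hYinv : (Y ^ 2)⁻¹ = 2 * t + L := by
    rw [inv_cubicSol_sq (by linarith)]; ring
  have hdist := abs_sub_le_of_inv_sq_le (δ := 4 * ε / γ * (exp (-γ * t) / Y₀ ^ 3))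
    (hY₀.trans_le (hlower t ht)) hY (by linarith [(hL t hT).1]) (by linarith [(hL t hT).2])
  have hYY₀ : Y ≤ 2 * Y₀ := cubicSol_le_two_mul (by linarith) (by linarith)
  rw [norm_eq_abs, norm_eq_abs, abs_of_pos (exp_pos _)]
  calc |y t - Y| ≤ 4 * ε / γ * (exp (-γ * t) / Y₀ ^ 3) * Y ^ 3 := hdist
    _ ≤ 4 * ε / γ * (exp (-γ * t) / Y₀ ^ 3) * (2 * Y₀) ^ 3 := by gcongr
    _ = 32 * ε / γ * exp (-γ * t) := by field_simp; ring
end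

section
/- Every solution of the scalar ODE R' = -R³ - R⁵ + O(R⁷) with small positive initial data satisfies R(τ) = (1/√(2τ))·[1 - (1/(4τ))(ln τ + C) + o(τ^{-1})] as τ → ∞, for some constant C depending on the initial condition. -/
open Filter Set Topology Asymptotics

/-!
With `u = R⁻²` the equation becomes `u' = 2 + 2 / u + O(u⁻²)`, once a barrier argument keeps the
solution in `(0, R 0]`. Hence `u ≥ u 0 + 2τ`, `u - 2τ = O(log τ)`, and `u - 2τ - log u` has
derivative `O(τ⁻²)`, so it converges to some `L`. Writing `u = 2τ(1 + x)` with `x = O(log τ / τ)`,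
the expansion `1 / √(1 + x) = 1 - x / 2 + O(x²)` and `u - 2τ = log (2τ) + L + o(1)` give the
asymptotics with `C = L + log 2`.
-/

lemma monotoneOn_Ici_of_hasDerivAt_nonneg {f f' : ℝ → ℝ} {a : ℝ}
    (hf : ∀ x ∈ Ici a, HasDerivAt f (f' x) x) (hf' : ∀ x ∈ Ici a, 0 ≤ f' x) :
    MonotoneOn f (Ici a) :=
  monotoneOn_of_hasDerivWithinAt_nonneg (convex_Ici a)
    (fun x hx => (hf x hx).continuousAt.continuousWithinAt)
    (fun x hx => (hf x (interior_subset hx)).hasDerivWithinAt)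
    (fun x hx => hf' x (interior_subset hx))

lemma antitoneOn_Ici_of_hasDerivAt_nonpos {f f' : ℝ → ℝ} {a : ℝ}
    (hf : ∀ x ∈ Ici a, HasDerivAt f (f' x) x) (hf' : ∀ x ∈ Ici a, f' x ≤ 0) :
    AntitoneOn f (Ici a) :=
  antitoneOn_of_hasDerivWithinAt_nonpos (convex_Ici a)
    (fun x hx => (hf x hx).continuousAt.continuousWithinAt)
    (fun x hx => (hf x (interior_subset hx)).hasDerivWithinAt)
    (fun x hx => hf' x (interior_subset hx))

lemma exists_abs_sub_le_of_abs_deriv_le {f f' w w' : ℝ → ℝ} {a : ℝ}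
    (hf : ∀ x ∈ Ici a, HasDerivAt f (f' x) x) (hw : ∀ x ∈ Ici a, HasDerivAt w (w' x) x)
    (hw₀ : ∀ x ∈ Ici a, 0 ≤ w x) (hbound : ∀ x ∈ Ici a, |f' x| ≤ -w' x) :
    ∃ L, ∀ x ∈ Ici a, |f x - L| ≤ w x := by
  have hlower : MonotoneOn (fun x => f x - w x) (Ici a) :=
    monotoneOn_Ici_of_hasDerivAt_nonneg (fun x hx => (hf x hx).sub (hw x hx))
      fun x hx => by linarith [neg_abs_le (f' x), hbound x hx]
  have hupper : AntitoneOn (fun x => f x + w x) (Ici a) :=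
    antitoneOn_Ici_of_hasDerivAt_nonpos (fun x hx => (hf x hx).add (hw x hx))
      fun x hx => by linarith [le_abs_self (f' x), hbound x hx]
  have hsep : ∀ x ∈ Ici a, ∀ y ∈ Ici a, f x - w x ≤ f y + w y := by
    intro x hx y hy
    rcases le_total x y with hxy | hyx
    · linarith [hlower hx hy hxy, hw₀ y hy]
    · linarith [hupper hy hx hyx, hw₀ x hx]
  have hne : ((fun x => f x - w x) '' Ici a).Nonempty := (nonempty_Ici.image _)
  have hbdd : BddAbove ((fun x => f x - w x) '' Ici a) :=
    ⟨f a + w a, forall_mem_image.2 fun x hx => hsep x hx a self_mem_Ici⟩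
  refine ⟨sSup ((fun x => f x - w x) '' Ici a), fun x hx => abs_le.2 ⟨?_, ?_⟩⟩
  · linarith [csSup_le hne (forall_mem_image.2 fun y hy => hsep y hy x hx)]
  · linarith [le_csSup hbdd (mem_image_of_mem _ hx)]

lemma abs_inv_sqrt_one_add_sub_le {x : ℝ} (hx : 0 ≤ x) :
    |1 / √(1 + x) - 1 + x / 2| ≤ x ^ 2 := by
  set s := √(1 + x)
  have hs1 : 1 ≤ s := Real.one_le_sqrt.2 (by linarith)
  have hx_eq : x = s ^ 2 - 1 := by rw [Real.sq_sqrt (by linarith)]; ring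
  have key : 1 / s - 1 + x / 2 = (s - 1) ^ 2 * (s + 2) / (2 * s) := by
    rw [hx_eq]; field_simp; ring
  rw [key, abs_of_nonneg (by positivity), div_le_iff₀ (by positivity), hx_eq]
  nlinarith [sq_nonneg (s - 1), mul_nonneg (sq_nonneg (s - 1)) (sub_nonneg.2 hs1)]

lemma log_const_add_two_mul_isLittleO_sqrt (a : ℝ) :
    (fun τ => Real.log (a + 2 * τ)) =o[atTop] Real.sqrt := by
  have hlog : (fun τ => Real.log (a + 2 * τ)) =O[atTop] Real.log := by
    refine IsBigO.of_bound 2 ?_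
    filter_upwards [eventually_ge_atTop (|a| + 2)] with τ hτ
    have h1 : 1 ≤ a + 2 * τ := by linarith [neg_abs_le a, abs_nonneg a]
    have h2 : a + 2 * τ ≤ τ ^ 2 := by nlinarith [le_abs_self a, abs_nonneg a]
    have hτ : 1 ≤ τ := by linarith [abs_nonneg a]
    rw [Real.norm_eq_abs, Real.norm_eq_abs, abs_of_nonneg (Real.log_nonneg h1),
      abs_of_nonneg (Real.log_nonneg hτ)]
    calc Real.log (a + 2 * τ) ≤ Real.log (τ ^ 2) := Real.log_le_log (by linarith) h2
      _ = 2 * Real.log τ := by rw [Real.log_pow]; norm_num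
  refine hlog.trans_isLittleO ?_
  simpa only [← Real.sqrt_eq_rpow] using isLittleO_log_rpow_atTop (r := 1 / 2) (by norm_num)

lemma abs_mul_sqrt_div_sqrt_expansion_le {τ u L : ℝ} (hτ : 0 < τ) (hu : 2 * τ ≤ u) :
    |τ * (√(2 * τ) / √u - 1 + 1 / (4 * τ) * (Real.log τ + (L + Real.log 2)))|
      ≤ (u - 2 * τ) ^ 2 / (4 * τ) + |u - 2 * τ - Real.log u - L| / 4
        + (u - 2 * τ) / (8 * τ) := by
  set x := (u - 2 * τ) / (2 * τ) with hx
  have hx0 : 0 ≤ x := div_nonneg (by linarith) (by linarith)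
  have hu_eq : u = 2 * τ * (1 + x) := by rw [hx]; field_simp; ring
  have hsqrt : √(2 * τ) / √u = 1 / √(1 + x) := by
    rw [hu_eq, Real.sqrt_mul (show 0 ≤ 2 * τ by linarith) (1 + x),
      div_mul_cancel_left₀ (by positivity), one_div]
  have hlog : Real.log u = Real.log 2 + Real.log τ + Real.log (1 + x) := by
    rw [hu_eq, Real.log_mul (by positivity) (by linarith), Real.log_mul two_ne_zero hτ.ne']
  have hsplit : τ * (√(2 * τ) / √u - 1 + 1 / (4 * τ) * (Real.log τ + (L + Real.log 2)))
      = τ * (1 / √(1 + x) - 1 + x / 2)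
        - ((u - 2 * τ - Real.log u - L) + Real.log (1 + x)) / 4 := by
    rw [hsqrt, hlog, hx]; field_simp; ring
  have hA : |τ * (1 / √(1 + x) - 1 + x / 2)| ≤ (u - 2 * τ) ^ 2 / (4 * τ) := by
    rw [abs_mul, abs_of_pos hτ]
    calc τ * |1 / √(1 + x) - 1 + x / 2| ≤ τ * x ^ 2 :=
          mul_le_mul_of_nonneg_left (abs_inv_sqrt_one_add_sub_le hx0) hτ.le
      _ = (u - 2 * τ) ^ 2 / (4 * τ) := by rw [hx]; field_simp; ring
  have hlog1 : 0 ≤ Real.log (1 + x) := Real.log_nonneg (by linarith)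
  have hlog2 : Real.log (1 + x) ≤ (u - 2 * τ) / (2 * τ) := by
    linarith [Real.log_le_sub_one_of_pos (show 0 < 1 + x by linarith)]
  have h8 : (u - 2 * τ) / (8 * τ) = (u - 2 * τ) / (2 * τ) / 4 := by field_simp; ring
  rw [hsplit]
  calc _ ≤ |τ * (1 / √(1 + x) - 1 + x / 2)|
          + (|u - 2 * τ - Real.log u - L| + Real.log (1 + x)) / 4 := by
        refine (abs_sub _ _).trans (add_le_add_right ?_ _)
        rw [abs_div, abs_of_pos (by norm_num : (0 : ℝ) < 4)]
        gcongr
        exact (abs_add_le _ _).trans_eq (by rw [abs_of_nonneg hlog1])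
    _ ≤ _ := by linarith

theorem isLittleO_sqrt_div_sqrt_expansion {u : ℝ → ℝ} {L : ℝ}
    (hu : ∀ᶠ τ in atTop, 2 * τ ≤ u τ) (hD : (fun τ => u τ - 2 * τ) =o[atTop] Real.sqrt)
    (hv : Tendsto (fun τ => u τ - 2 * τ - Real.log (u τ)) atTop (𝓝 L)) :
    (fun τ => √(2 * τ) / √(u τ) - 1 + 1 / (4 * τ) * (Real.log τ + (L + Real.log 2)))
      =o[atTop] fun τ => 1 / τ := by
  have hε : Tendsto (fun τ => (u τ - 2 * τ) / √τ) atTop (𝓝 0) := hD.tendsto_div_nhds_zero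
  have hinv : Tendsto (fun τ : ℝ => (√τ)⁻¹) atTop (𝓝 0) :=
    tendsto_inv_atTop_zero.comp Real.tendsto_sqrt_atTop
  have hsq : Tendsto (fun τ => (u τ - 2 * τ) ^ 2 / (4 * τ)) atTop (𝓝 0) := by
    refine ((hε.pow 2).div_const 4).congr' ?_ |>.trans (by norm_num)
    filter_upwards [eventually_gt_atTop 0] with τ hτ
    rw [div_pow, Real.sq_sqrt hτ.le]; ring
  have hdev : Tendsto (fun τ => |u τ - 2 * τ - Real.log (u τ) - L| / 4) atTop (𝓝 0) := by
    simpa using ((hv.sub_const L).abs.div_const 4)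
  have hlin : Tendsto (fun τ => (u τ - 2 * τ) / (8 * τ)) atTop (𝓝 0) := by
    refine ((hε.mul hinv).div_const 8).congr' ?_ |>.trans (by norm_num)
    filter_upwards [eventually_gt_atTop 0] with τ hτ
    have : √τ ≠ 0 := (Real.sqrt_pos.2 hτ).ne'
    field_simp
    rw [Real.sq_sqrt hτ.le]; ring
  have hτE : Tendsto (fun τ => τ * (√(2 * τ) / √(u τ) - 1
      + 1 / (4 * τ) * (Real.log τ + (L + Real.log 2)))) atTop (𝓝 0) := by
    refine squeeze_zero_norm' ?_ (by simpa using (hsq.add hdev).add hlin)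
    filter_upwards [hu, eventually_gt_atTop 0] with τ hτu hτ
    exact abs_mul_sqrt_div_sqrt_expansion_le hτ hτu
  rw [isLittleO_iff_tendsto'
    (eventually_gt_atTop 0 |>.mono fun τ hτ h => absurd h (by positivity))]
  refine hτE.congr' (eventually_gt_atTop 0 |>.mono fun τ hτ => ?_)
  simp only [div_div_eq_mul_div, div_one, mul_comm]

structure IsInvSqFlow (u g : ℝ → ℝ) (K : ℝ) : Prop where
  hasDerivAt : ∀ τ ∈ Ici (0 : ℝ), HasDerivAt u (2 + 2 / u τ + g τ) τ
  abs_le_div_sq : ∀ τ ∈ Ici (0 : ℝ), |g τ| ≤ K / u τ ^ 2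
  const_le : ∀ τ ∈ Ici (0 : ℝ), K ≤ u τ
  one_le : ∀ τ ∈ Ici (0 : ℝ), 1 ≤ u τ

namespace IsInvSqFlow

variable {u g : ℝ → ℝ} {K : ℝ}

lemma pos (hf : IsInvSqFlow u g K) : ∀ τ ∈ Ici (0 : ℝ), 0 < u τ :=
  fun τ hτ => one_pos.trans_le (hf.one_le τ hτ)

lemma add_two_mul_le (hf : IsInvSqFlow u g K) : ∀ τ ∈ Ici (0 : ℝ), u 0 + 2 * τ ≤ u τ := by
  have hmono : MonotoneOn (fun τ => u τ - 2 * τ) (Ici 0) := by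
    refine monotoneOn_Ici_of_hasDerivAt_nonneg (f' := fun τ => 2 / u τ + g τ)
      (fun τ hτ => ((hf.hasDerivAt τ hτ).sub ((hasDerivAt_id τ).const_mul 2)).congr_deriv
        (by ring)) fun τ hτ => ?_
    have hu := hf.pos τ hτ
    have hKu : K / u τ ^ 2 ≤ 2 / u τ := by
      rw [div_le_div_iff₀ (by positivity) hu]
      nlinarith [hf.const_le τ hτ]
    linarith [(abs_le.1 (hf.abs_le_div_sq τ hτ)).1]
  intro τ hτ
  linarith [hmono self_mem_Ici hτ hτ]

lemma sub_two_mul_le (hf : IsInvSqFlow u g K) :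
    ∀ τ ∈ Ici (0 : ℝ), u τ - 2 * τ
      ≤ u 0 - 3 / 2 * Real.log (u 0) + 3 / 2 * Real.log (u 0 + 2 * τ) := by
  have hpos : ∀ τ ∈ Ici (0 : ℝ), 0 < u 0 + 2 * τ := fun τ hτ => by
    linarith [hf.pos 0 self_mem_Ici, mem_Ici.1 hτ]
  have hanti : AntitoneOn (fun τ => u τ - 2 * τ - 3 / 2 * Real.log (u 0 + 2 * τ)) (Ici 0) := by
    refine antitoneOn_Ici_of_hasDerivAt_nonpos
      (f' := fun τ => 2 / u τ + g τ - 3 / (u 0 + 2 * τ)) (fun τ hτ => ?_) fun τ hτ => ?_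
    · have hlin : HasDerivAt (fun τ => u 0 + 2 * τ) 2 τ := by
        simpa using ((hasDerivAt_id τ).const_mul 2).const_add (u 0)
      exact (((hf.hasDerivAt τ hτ).sub ((hasDerivAt_id τ).const_mul 2)).sub
        ((hlin.log (hpos τ hτ).ne').const_mul (3 / 2))).congr_deriv (by field_simp; ring)
    · have hu := hf.pos τ hτ
      have hKu : K / u τ ^ 2 ≤ 1 / u τ := by
        rw [div_le_div_iff₀ (by positivity) hu]
        nlinarith [hf.const_le τ hτ]
      have hinv : 3 / u τ ≤ 3 / (u 0 + 2 * τ) :=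
        div_le_div_of_nonneg_left (by norm_num) (hpos τ hτ) (hf.add_two_mul_le τ hτ)
      have : 2 / u τ + 1 / u τ = 3 / u τ := by ring
      linarith [(abs_le.1 (hf.abs_le_div_sq τ hτ)).2]
  intro τ hτ
  have := hanti self_mem_Ici hτ hτ
  simp only [mul_zero, add_zero, sub_zero] at this
  linarith

lemma sub_two_mul_isLittleO_sqrt (hf : IsInvSqFlow u g K) :
    (fun τ => u τ - 2 * τ) =o[atTop] Real.sqrt := by
  have hbound : (fun τ => u τ - 2 * τ)
      =O[atTop] fun τ => u 0 - 3 / 2 * Real.log (u 0) + 3 / 2 * Real.log (u 0 + 2 * τ) := by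
    refine IsBigO.of_bound 1 ?_
    filter_upwards [eventually_ge_atTop 0] with τ hτ
    have hlow := hf.add_two_mul_le τ hτ
    have hup := hf.sub_two_mul_le τ hτ
    have hu₀ := hf.pos 0 self_mem_Ici
    rw [one_mul, Real.norm_eq_abs, Real.norm_eq_abs, abs_of_nonneg (by linarith),
      abs_of_nonneg (by linarith)]
    exact hup
  refine hbound.trans_isLittleO
    (.add ?_ ((log_const_add_two_mul_isLittleO_sqrt _).const_mul_left _))
  exact isLittleO_const_left.2 <| .inr <| tendsto_norm_atTop_atTop.comp Real.tendsto_sqrt_atTop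

lemma exists_tendsto_sub_two_mul_sub_log (hf : IsInvSqFlow u g K) :
    ∃ L, Tendsto (fun τ => u τ - 2 * τ - Real.log (u τ)) atTop (𝓝 L) := by
  have hu₀ := hf.pos
  have hK : 0 ≤ K := by
    have := mul_nonneg ((abs_nonneg _).trans (hf.abs_le_div_sq 0 self_mem_Ici)) (sq_nonneg (u 0))
    rwa [div_mul_cancel₀ _ (by positivity [hu₀ 0 self_mem_Ici])] at this
  have hpos : ∀ τ ∈ Ici (0 : ℝ), 0 < u 0 + 2 * τ := fun τ hτ => by
    linarith [hu₀ 0 self_mem_Ici, mem_Ici.1 hτ]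
  have hv : ∀ τ ∈ Ici (0 : ℝ), HasDerivAt (fun τ => u τ - 2 * τ - Real.log (u τ))
      (g τ * (1 - 1 / u τ) - 2 / u τ ^ 2) τ := fun τ hτ =>
    (((hf.hasDerivAt τ hτ).sub ((hasDerivAt_id τ).const_mul 2)).sub
      ((hf.hasDerivAt τ hτ).log (hu₀ τ hτ).ne')).congr_deriv (by field_simp; ring)
  have hv_le : ∀ τ ∈ Ici (0 : ℝ), |g τ * (1 - 1 / u τ) - 2 / u τ ^ 2|
      ≤ (K + 2) / (u 0 + 2 * τ) ^ 2 := by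
    intro τ hτ
    have hinv : 1 / u τ ≤ 1 := (div_le_one (hu₀ τ hτ)).2 (hf.one_le τ hτ)
    have habs : |1 - 1 / u τ| ≤ 1 :=
      abs_le.2 ⟨by linarith, by linarith [one_div_pos.2 (hu₀ τ hτ)]⟩
    calc |g τ * (1 - 1 / u τ) - 2 / u τ ^ 2|
          ≤ |g τ * (1 - 1 / u τ)| + |2 / u τ ^ 2| := abs_sub _ _
      _ = |g τ| * |1 - 1 / u τ| + 2 / u τ ^ 2 := by
          rw [abs_mul, abs_of_pos (show 0 < 2 / u τ ^ 2 by positivity [hu₀ τ hτ])]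
      _ ≤ K / u τ ^ 2 + 2 / u τ ^ 2 := by
          gcongr
          exact (mul_le_of_le_one_right (abs_nonneg _) habs).trans (hf.abs_le_div_sq τ hτ)
      _ ≤ (K + 2) / (u 0 + 2 * τ) ^ 2 := by
          rw [← add_div]
          exact div_le_div_of_nonneg_left (by linarith) (by positivity [hpos τ hτ])
            (pow_le_pow_left₀ (hpos τ hτ).le (hf.add_two_mul_le τ hτ) 2)
  -- `w` is the tail integral of the bound on the derivative
  set w : ℝ → ℝ := fun τ => (K + 2) / 2 * (u 0 + 2 * τ)⁻¹
  have hw : ∀ τ ∈ Ici (0 : ℝ), HasDerivAt w (-((K + 2) / (u 0 + 2 * τ) ^ 2)) τ := by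
    intro τ hτ
    have hlin : HasDerivAt (fun τ => u 0 + 2 * τ) 2 τ := by
      simpa using ((hasDerivAt_id τ).const_mul 2).const_add (u 0)
    exact ((hlin.inv (hpos τ hτ).ne').const_mul ((K + 2) / 2)).congr_deriv (by field_simp)
  obtain ⟨L, hL⟩ := exists_abs_sub_le_of_abs_deriv_le hv hw
    (fun τ hτ => by positivity [hpos τ hτ]) fun τ hτ => by rw [neg_neg]; exact hv_le τ hτ
  have hw_lim : Tendsto w atTop (𝓝 0) := by
    simpa using (tendsto_inv_atTop_zero.comp (tendsto_atTop_add_const_left _ (u 0)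
      (tendsto_id.const_mul_atTop two_pos))).const_mul ((K + 2) / 2)
  refine ⟨L, tendsto_iff_norm_sub_tendsto_zero.2
    (squeeze_zero' (.of_forall fun _ => norm_nonneg _) ?_ hw_lim)⟩
  filter_upwards [eventually_ge_atTop 0] with τ hτ using hL τ hτ

end IsInvSqFlow

section CenterManifold

variable {K δ : ℝ} {h R : ℝ → ℝ}

lemma mul_sq_le_of_mul_sq_le (hKδ : K * δ ^ 2 ≤ 1 / 2) {x : ℝ} (hx : 0 < x) (hxδ : x ≤ δ) :
    K * x ^ 2 ≤ 1 / 2 := by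
  rcases le_or_gt 0 K with hK | hK
  · nlinarith [pow_le_pow_left₀ hx.le hxδ 2]
  · nlinarith [sq_nonneg x]

lemma abs_le_half_pow_five (hKδ : K * δ ^ 2 ≤ 1 / 2)
    (hh : ∀ x : ℝ, |x| ≤ δ → |h x| ≤ K * |x| ^ 7) {x : ℝ} (hx : 0 < x) (hxδ : x ≤ δ) :
    |h x| ≤ x ^ 5 / 2 := by
  have := hh x (by rwa [abs_of_pos hx])
  rw [abs_of_pos hx] at this
  nlinarith [mul_sq_le_of_mul_sq_le hKδ hx hxδ, pow_pos hx 5]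

-- `R 0` is an upper barrier and `R 0 * exp (-3 τ)` a lower one.
lemma mem_Ioc_of_hasDerivAt (hδ : δ ≤ 1) (hKδ : K * δ ^ 2 ≤ 1 / 2)
    (hh : ∀ x : ℝ, |x| ≤ δ → |h x| ≤ K * |x| ^ 7)
    (hR : ∀ τ ∈ Ici (0 : ℝ), HasDerivAt R (-(R τ) ^ 3 - (R τ) ^ 5 + h (R τ)) τ)
    (hR₀ : 0 < R 0) (hRδ : R 0 ≤ δ) :
    ∀ τ ∈ Ici (0 : ℝ), R τ ∈ Ioc 0 (R 0) := by
  intro τ hτ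
  have hcont : ContinuousOn R (Icc 0 τ) := fun t ht => (hR t ht.1).continuousAt.continuousWithinAt
  have hderiv : ∀ t ∈ Ico 0 τ, HasDerivWithinAt R (-(R t) ^ 3 - (R t) ^ 5 + h (R t)) (Ici t) t :=
    fun t ht => (hR t ht.1).hasDerivWithinAt
  have hle : ∀ t ∈ Icc 0 τ, R t ≤ R 0 := by
    refine image_le_of_deriv_right_lt_deriv_boundary' hcont hderiv le_rfl continuousOn_const
      (fun t _ => hasDerivWithinAt_const _ _ _) fun t _ hRt => ?_
    rw [hRt]
    nlinarith [abs_le.1 (abs_le_half_pow_five hKδ hh hR₀ hRδ), pow_pos hR₀ 3, pow_pos hR₀ 5]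
  have hexp : ∀ t, HasDerivAt (fun t => R 0 * Real.exp (-3 * t))
      (-3 * (R 0 * Real.exp (-3 * t))) t :=
    fun t => (((hasDerivAt_id t).const_mul (-3)).exp.const_mul (R 0)).congr_deriv (by simp; ring)
  have hge : ∀ t ∈ Icc 0 τ, R 0 * Real.exp (-3 * t) ≤ R t := by
    refine image_le_of_deriv_right_lt_deriv_boundary'
      (fun t _ => (hexp t).continuousAt.continuousWithinAt) (fun t _ => (hexp t).hasDerivWithinAt)
      (by simp) hcont hderiv fun t ht hRt => ?_
    have hpos : 0 < R t := hRt ▸ by positivity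
    have hRt_le := hle t (Ico_subset_Icc_self ht)
    have hR1 : R t ≤ 1 := hRt_le.trans (hRδ.trans hδ)
    have hhR := abs_le.1 (abs_le_half_pow_five hKδ hh hpos (hRt_le.trans hRδ))
    rw [hRt]
    nlinarith [pow_le_one₀ hpos.le hR1 (n := 2), pow_le_one₀ hpos.le hR1 (n := 4), pow_pos hpos 3,
      pow_pos hpos 5]
  exact ⟨(by positivity : 0 < R 0 * Real.exp (-3 * τ)).trans_le (hge τ ⟨hτ, le_rfl⟩),
    hle τ ⟨hτ, le_rfl⟩⟩

lemma isInvSqFlow_inv_sq (hδ : δ ≤ 1) (hKδ : K * δ ^ 2 ≤ 1 / 2)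
    (hh : ∀ x : ℝ, |x| ≤ δ → |h x| ≤ K * |x| ^ 7)
    (hR : ∀ τ ∈ Ici (0 : ℝ), HasDerivAt R (-(R τ) ^ 3 - (R τ) ^ 5 + h (R τ)) τ)
    (hR₀ : 0 < R 0) (hRδ : R 0 ≤ δ) :
    IsInvSqFlow (fun τ => (R τ ^ 2)⁻¹) (fun τ => -2 * h (R τ) / R τ ^ 3) (2 * K) := by
  have hmem := mem_Ioc_of_hasDerivAt hδ hKδ hh hR hR₀ hRδ
  have hpos : ∀ τ ∈ Ici (0 : ℝ), 0 < R τ := fun τ hτ => (hmem τ hτ).1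
  have hleδ : ∀ τ ∈ Ici (0 : ℝ), R τ ≤ δ := fun τ hτ => (hmem τ hτ).2.trans hRδ
  refine ⟨fun τ hτ => ?_, fun τ hτ => ?_, fun τ hτ => ?_, fun τ hτ => ?_⟩
  · have hne := (hpos τ hτ).ne'
    exact (((hR τ hτ).fun_pow 2).fun_inv (pow_ne_zero 2 hne)).congr_deriv (by field_simp; ring)
  · have hρ := hpos τ hτ
    have hhρ := hh (R τ) (by rw [abs_of_pos hρ]; exact hleδ τ hτ)
    rw [abs_of_pos hρ] at hhρ
    rw [inv_pow, div_inv_eq_mul, abs_div, abs_mul, abs_of_pos (pow_pos hρ 3),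
      div_le_iff₀ (pow_pos hρ 3), abs_neg, abs_two]
    nlinarith
  · have hρ := hpos τ hτ
    rw [← one_div, le_div_iff₀ (by positivity)]
    linarith [mul_sq_le_of_mul_sq_le hKδ hρ (hleδ τ hτ)]
  · have hρ := hpos τ hτ
    rw [← one_div, le_div_iff₀ (by positivity), one_mul]
    exact pow_le_one₀ hρ.le ((hleδ τ hτ).trans hδ)

end CenterManifold

/-- Every solution of `R' = -R³ - R⁵ + O(R⁷)` with sufficiently small positive initial
data satisfies `R(τ) = (1/√(2τ))(1 - (1/(4τ))(ln τ + C) + o(1/τ))` as `τ → ∞`. -/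
theorem center_manifold_flow_asymptotic (K : ℝ) (hK : 0 < K) :
    ∃ δ₀ > (0:ℝ), ∀ (h : ℝ → ℝ) (R : ℝ → ℝ),
      (∀ x : ℝ, |x| ≤ δ₀ → |h x| ≤ K * |x|^7) →
      (∀ τ ∈ Ici (0:ℝ), HasDerivAt R (-(R τ)^3 - (R τ)^5 + h (R τ)) τ) →
      0 < R 0 → R 0 < δ₀ →
      ∃ (C : ℝ) (E : ℝ → ℝ),
        (∀ᶠ τ in atTop,
          R τ = (1 / Real.sqrt (2 * τ)) * (1 - (1 / (4 * τ)) * (Real.log τ + C) + E τ)) ∧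
        E =o[atTop] (fun τ => 1 / τ) := by
  set δ := min 1 (1 / (2 * K))
  have hδ : δ ≤ 1 := min_le_left _ _
  have hKδ : K * δ ^ 2 ≤ 1 / 2 := by
    have hδK : K * δ ≤ 1 / 2 := by
      calc K * δ ≤ K * (1 / (2 * K)) := by gcongr; exact min_le_right _ _
        _ = 1 / 2 := by field_simp
    nlinarith [show 0 < δ by positivity]
  refine ⟨δ, by positivity, fun h R hh hR hR₀ hRδ => ?_⟩
  have hf := isInvSqFlow_inv_sq hδ hKδ hh hR hR₀ hRδ.le
  obtain ⟨L, hL⟩ := hf.exists_tendsto_sub_two_mul_sub_log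
  have h2τ : ∀ᶠ τ in atTop, 2 * τ ≤ (R τ ^ 2)⁻¹ := by
    filter_upwards [eventually_ge_atTop 0] with τ hτ
    linarith [hf.add_two_mul_le τ hτ, hf.pos 0 self_mem_Ici]
  refine ⟨L + Real.log 2, _, ?_,
    isLittleO_sqrt_div_sqrt_expansion h2τ hf.sub_two_mul_isLittleO_sqrt hL⟩
  filter_upwards [eventually_gt_atTop 0] with τ hτ
  have hRpos := (mem_Ioc_of_hasDerivAt hδ hKδ hh hR hR₀ hRδ.le τ hτ.le).1
  rw [Real.sqrt_inv, Real.sqrt_sq hRpos.le]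
  field_simp
  ring
end

section
/- Consider the planar system R' = Σ(1+Σ)R, Σ' = -Σ(1-Σ²) - R². For any solution with R > 0 and 1 - Σ² - R² > 0 initially, these inequalities persist and the solution satisfies lim_{τ→∞} Σ(τ) = 0 and lim_{τ→∞} R(τ) = 0; i.e. the origin is the future attractor of the truncated system on the region {R > 0, Σ² + R² < 1}. -/
/-!
With `Ω = 1 - Σ² - R²` the system gives `R' = Σ(1+Σ)R` and `Ω' = 2Σ²Ω`, so `R` and `Ω` solve
scalar linear equations and keep their sign; in particular `Ω` increases to a limit `L ≤ 1`.
Since `Ω' ≥ 2Ω(0)Σ²` and `Σ` is Lipschitz, Barbalat's argument gives `Σ → 0`. Then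
`Σ' = -Σ(1-Σ²) - (1 - Σ² - Ω) → L - 1`, which must vanish because `Σ` converges; hence `Ω → 1`
and `R² = 1 - Σ² - Ω → 0`.
-/

open Filter Set Topology

theorem pos_of_hasDerivAt_eq_mul {f b : ℝ → ℝ} (hb : ContinuousOn b (Ici 0))
    (hf : ∀ t ∈ Ici (0:ℝ), HasDerivAt f (b t * f t) t) (h0 : 0 < f 0) {t : ℝ} (ht : t ∈ Ici 0) :
    0 < f t := by
  -- `f · exp (-∫₀ b)` is constant; `b` is extended to `ℝ` by `b (max x 0)` to integrate it.
  have hb' : Continuous fun x => b (max x 0) :=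
    hb.comp_continuous (continuous_id.max continuous_const) fun x => le_max_right x 0
  set A : ℝ → ℝ := fun x => ∫ s in (0:ℝ)..x, b (max s 0)
  have hA (x : ℝ) : HasDerivAt A (b (max x 0)) x := (hb'.integral_hasStrictDerivAt 0 x).hasDerivAt
  have hconst : ∀ x ∈ Icc 0 t, f x * Real.exp (-A x) = f 0 * Real.exp (-A 0) := by
    refine constant_of_has_deriv_right_zero
      (fun x hx => ((hf x hx.1).continuousAt.mul (hA x).neg.exp.continuousAt).continuousWithinAt)
      fun x hx => ?_
    have hd := (hf x hx.1).fun_mul (hA x).fun_neg.exp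
    rw [max_eq_left hx.1] at hd
    convert hd.hasDerivWithinAt using 1
    ring
  have := hconst t ⟨ht, le_rfl⟩
  simp only [A, intervalIntegral.integral_same, neg_zero, Real.exp_zero, mul_one] at this
  exact pos_of_mul_pos_left (this ▸ h0) (Real.exp_pos _).le

theorem exists_tendsto_atTop_of_monotoneOn_Ici {f : ℝ → ℝ} {a : ℝ} (hf : MonotoneOn f (Ici a))
    (hbdd : BddAbove (f '' Ici a)) : ∃ L, Tendsto f atTop (𝓝 L) := by
  have hmono : Monotone fun x => f (max x a) := fun x y hxy =>
    hf (le_max_right x a) (le_max_right y a) (max_le_max_right a hxy)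
  refine ⟨_, (tendsto_atTop_ciSup hmono (hbdd.mono ?_)).congr' ?_⟩
  · rintro _ ⟨x, rfl⟩
    exact mem_image_of_mem f (le_max_right x a)
  · filter_upwards [eventually_ge_atTop a] with x hx
    rw [max_eq_left hx]

theorem tendsto_atTop_of_hasDerivAt_of_tendsto_pos {u u' : ℝ → ℝ} {l : ℝ} (hl : 0 < l)
    (hu : ∀ᶠ t in atTop, HasDerivAt u (u' t) t) (hu' : Tendsto u' atTop (𝓝 l)) :
    Tendsto u atTop atTop := by
  obtain ⟨T, hT⟩ := eventually_atTop.mp (hu.and (hu'.eventually (lt_mem_nhds (half_lt_self hl))))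
  have hgrowth : ∀ t ≥ T, l / 2 * (t - T) + u T ≤ u t := by
    intro t ht
    have := (convex_Ici T).mul_sub_le_image_sub_of_le_deriv
      (fun x hx => (hT x hx).1.continuousAt.continuousWithinAt)
      (fun x hx => (hT x (interior_subset hx)).1.differentiableAt.differentiableWithinAt)
      (fun x hx => ((hT x (interior_subset hx)).1.deriv).symm ▸ (hT x (interior_subset hx)).2.le)
      T self_mem_Ici t ht ht
    linarith
  refine tendsto_atTop_mono' atTop (eventually_atTop.mpr ⟨T, hgrowth⟩) ?_
  exact tendsto_atTop_add_const_right _ _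
    ((tendsto_atTop_add_const_right _ _ tendsto_id).const_mul_atTop (half_pos hl))

theorem eq_zero_of_tendsto_of_hasDerivAt_tendsto {u u' : ℝ → ℝ} {a l : ℝ}
    (hu : ∀ᶠ t in atTop, HasDerivAt u (u' t) t) (hua : Tendsto u atTop (𝓝 a))
    (hu' : Tendsto u' atTop (𝓝 l)) : l = 0 := by
  refine le_antisymm (not_lt.mp fun hl => ?_) (not_lt.mp fun hl => ?_)
  · exact not_tendsto_atTop_of_tendsto_nhds hua
      (tendsto_atTop_of_hasDerivAt_of_tendsto_pos hl hu hu')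
  · refine not_tendsto_atTop_of_tendsto_nhds hua.neg
      (tendsto_atTop_of_hasDerivAt_of_tendsto_pos (neg_pos.mpr hl) ?_ hu'.neg)
    filter_upwards [hu] with t ht using ht.neg

theorem tendsto_zero_of_uniformContinuousOn_of_sq_le_deriv {u g g' : ℝ → ℝ} {c L : ℝ} (hc : 0 < c)
    (hu : UniformContinuousOn u (Ici 0)) (hg : ∀ t ∈ Ici (0:ℝ), HasDerivAt g (g' t) t)
    (hg' : ∀ t ∈ Ici (0:ℝ), c * u t ^ 2 ≤ g' t) (hgL : Tendsto g atTop (𝓝 L)) :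
    Tendsto u atTop (𝓝 0) := by
  rw [Metric.tendsto_atTop]
  intro ε hε
  obtain ⟨δ, hδ, hδu⟩ := Metric.uniformContinuousOn_iff.mp hu (ε / 2) (half_pos hε)
  have hinc : Tendsto (fun t => g (t + δ / 2) - g t) atTop (𝓝 0) := by
    simpa using (hgL.comp (tendsto_atTop_add_const_right _ (δ / 2) tendsto_id)).sub hgL
  obtain ⟨T, hT⟩ := eventually_atTop.mp ((hinc.eventually
    (gt_mem_nhds (show 0 < c * (ε / 2) ^ 2 * (δ / 2) by positivity))).and (eventually_ge_atTop 0))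
  refine ⟨T, fun t ht => ?_⟩
  obtain ⟨hsmall, ht0⟩ := hT t ht
  rw [Real.dist_eq, sub_zero]
  by_contra! hbig
  -- a large value of `|u t|` persists on `[t, t + δ/2]` and makes `g` grow by a fixed amount there
  have hnear : ∀ x ∈ Icc t (t + δ / 2), ε / 2 ≤ |u x| := by
    intro x hx
    have hdist : dist t x < δ := by
      rw [Real.dist_eq, abs_sub_comm, abs_of_nonneg (by linarith [hx.1])]
      linarith [hx.2]
    have := hδu t (mem_Ici.mpr ht0) x (mem_Ici.mpr (ht0.trans hx.1)) hdist
    rw [Real.dist_eq] at this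
    linarith [abs_sub_abs_le_abs_sub (u t) (u x)]
  have hmem {x : ℝ} (hx : x ∈ Icc t (t + δ / 2)) : x ∈ Ici (0:ℝ) := ht0.trans hx.1
  have hgrowth := (convex_Icc t (t + δ / 2)).mul_sub_le_image_sub_of_le_deriv
    (fun x hx => (hg x (hmem hx)).continuousAt.continuousWithinAt)
    (fun x hx => (hg x (hmem (interior_subset hx))).differentiableAt.differentiableWithinAt)
    (C := c * (ε / 2) ^ 2) (fun x hx => by
      have hx' := interior_subset hx
      rw [(hg x (hmem hx')).deriv]
      refine le_trans ?_ (hg' x (hmem hx'))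
      rw [← sq_abs (u x)]
      gcongr
      exact hnear x hx')
    t (left_mem_Icc.mpr (by linarith)) (t + δ / 2) (right_mem_Icc.mpr (by linarith)) (by linarith)
  simp only [add_sub_cancel_left] at hgrowth
  linarith

theorem tendsto_zero_of_sq_tendsto_zero {α : Type*} {l : Filter α} {f : α → ℝ}
    (hf : Tendsto (fun a => f a ^ 2) l (𝓝 0)) : Tendsto f l (𝓝 0) := by
  rw [tendsto_zero_iff_abs_tendsto_zero]
  simpa [Real.sqrt_sq_eq_abs, Function.comp_def] using hf.sqrt

/-- The paper's `Ω`. -/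
def densityParameter (R S : ℝ → ℝ) (τ : ℝ) : ℝ := 1 - S τ ^ 2 - R τ ^ 2

section TruncatedSystem

variable {R S : ℝ → ℝ}

theorem hasDerivAt_densityParameter {τ : ℝ}
    (hR : HasDerivAt R (S τ * (1 + S τ) * R τ) τ)
    (hS : HasDerivAt S (-(S τ) * (1 - (S τ)^2) - (R τ)^2) τ) :
    HasDerivAt (densityParameter R S) (2 * S τ ^ 2 * densityParameter R S τ) τ := by
  refine (((hasDerivAt_const τ (1:ℝ)).fun_sub (hS.fun_pow 2)).fun_sub (hR.fun_pow 2)).congr_deriv ?_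
  simp only [densityParameter]
  ring

theorem monotoneOn_densityParameter
    (hRode : ∀ τ ∈ Ici (0:ℝ), HasDerivAt R (S τ * (1 + S τ) * R τ) τ)
    (hSode : ∀ τ ∈ Ici (0:ℝ), HasDerivAt S (-(S τ) * (1 - (S τ)^2) - (R τ)^2) τ)
    (hΩ : ∀ τ ∈ Ici (0:ℝ), 0 < densityParameter R S τ) :
    MonotoneOn (densityParameter R S) (Ici 0) := by
  have hd (τ) (hτ : τ ∈ Ici (0:ℝ)) := hasDerivAt_densityParameter (hRode τ hτ) (hSode τ hτ)
  refine monotoneOn_of_hasDerivWithinAt_nonneg (convex_Ici 0)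
    (fun τ hτ => (hd τ hτ).continuousAt.continuousWithinAt)
    (fun τ hτ => (hd τ (interior_subset hτ)).hasDerivWithinAt) fun τ hτ => ?_
  have := hΩ τ (interior_subset hτ)
  positivity

theorem uniformContinuousOn_of_densityParameter_pos
    (hSode : ∀ τ ∈ Ici (0:ℝ), HasDerivAt S (-(S τ) * (1 - (S τ)^2) - (R τ)^2) τ)
    (hΩ : ∀ τ ∈ Ici (0:ℝ), 0 < densityParameter R S τ) :
    UniformContinuousOn S (Ici 0) := by
  refine LipschitzOnWith.uniformContinuousOn (K := 2) <|
    (convex_Ici 0).lipschitzOnWith_of_nnnorm_hasDerivWithin_le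
      (fun τ hτ => (hSode τ hτ).hasDerivWithinAt) fun τ hτ => ?_
  have hτ := hΩ τ hτ
  simp only [densityParameter] at hτ
  have hS : |S τ| ≤ 1 := (sq_le_one_iff_abs_le_one _).mp (by nlinarith [sq_nonneg (R τ)])
  rw [← NNReal.coe_le_coe, coe_nnnorm, Real.norm_eq_abs, NNReal.coe_ofNat, abs_le]
  constructor <;> nlinarith [abs_le.mp hS, sq_nonneg (S τ), sq_nonneg (R τ)]

theorem exists_tendsto_densityParameter
    (hRode : ∀ τ ∈ Ici (0:ℝ), HasDerivAt R (S τ * (1 + S τ) * R τ) τ)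
    (hSode : ∀ τ ∈ Ici (0:ℝ), HasDerivAt S (-(S τ) * (1 - (S τ)^2) - (R τ)^2) τ)
    (hΩ : ∀ τ ∈ Ici (0:ℝ), 0 < densityParameter R S τ) :
    ∃ L, Tendsto (densityParameter R S) atTop (𝓝 L) := by
  refine exists_tendsto_atTop_of_monotoneOn_Ici (monotoneOn_densityParameter hRode hSode hΩ)
    ⟨1, ?_⟩
  rintro _ ⟨τ, -, rfl⟩
  simp only [densityParameter]
  nlinarith [sq_nonneg (S τ), sq_nonneg (R τ)]

theorem tendsto_S_atTop_zero
    (hRode : ∀ τ ∈ Ici (0:ℝ), HasDerivAt R (S τ * (1 + S τ) * R τ) τ)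
    (hSode : ∀ τ ∈ Ici (0:ℝ), HasDerivAt S (-(S τ) * (1 - (S τ)^2) - (R τ)^2) τ)
    (hΩ : ∀ τ ∈ Ici (0:ℝ), 0 < densityParameter R S τ) :
    Tendsto S atTop (𝓝 0) := by
  obtain ⟨L, hL⟩ := exists_tendsto_densityParameter hRode hSode hΩ
  refine tendsto_zero_of_uniformContinuousOn_of_sq_le_deriv (mul_pos two_pos (hΩ 0 self_mem_Ici))
    (uniformContinuousOn_of_densityParameter_pos hSode hΩ)
    (fun τ hτ => hasDerivAt_densityParameter (hRode τ hτ) (hSode τ hτ)) (fun τ hτ => ?_) hL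
  have := monotoneOn_densityParameter hRode hSode hΩ self_mem_Ici hτ hτ
  nlinarith [sq_nonneg (S τ)]

theorem tendsto_densityParameter_atTop_one
    (hRode : ∀ τ ∈ Ici (0:ℝ), HasDerivAt R (S τ * (1 + S τ) * R τ) τ)
    (hSode : ∀ τ ∈ Ici (0:ℝ), HasDerivAt S (-(S τ) * (1 - (S τ)^2) - (R τ)^2) τ)
    (hΩ : ∀ τ ∈ Ici (0:ℝ), 0 < densityParameter R S τ) :
    Tendsto (densityParameter R S) atTop (𝓝 1) := by
  obtain ⟨L, hL⟩ := exists_tendsto_densityParameter hRode hSode hΩ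
  have hS := tendsto_S_atTop_zero hRode hSode hΩ
  have hS' : Tendsto (fun τ => -(S τ) * (1 - (S τ)^2) - (R τ)^2) atTop (𝓝 (L - 1)) := by
    convert (hS.neg.mul ((tendsto_const_nhds (x := (1:ℝ))).sub (hS.pow 2))).sub
      ((tendsto_const_nhds (x := (1:ℝ))).sub (hS.pow 2) |>.sub hL) using 1
    · ext τ
      simp only [densityParameter]
      ring
    · norm_num
  have hL1 := eq_zero_of_tendsto_of_hasDerivAt_tendsto
    (eventually_ge_atTop 0 |>.mono hSode) hS hS'
  rwa [sub_eq_zero.mp hL1] at hL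

end TruncatedSystem

/-- For the truncated system `R' = Σ(1+Σ)R`, `Σ' = -Σ(1-Σ²) - R²`, the conditions
`R > 0` and `Σ² + R² < 1` persist, and every such solution tends to the origin:
the origin is the future attractor on `{R > 0, Σ² + R² < 1}`. -/
theorem truncated_system_future_attractor (R S : ℝ → ℝ)
    (hRode : ∀ τ ∈ Ici (0:ℝ), HasDerivAt R (S τ * (1 + S τ) * R τ) τ)
    (hSode : ∀ τ ∈ Ici (0:ℝ), HasDerivAt S (-(S τ) * (1 - (S τ)^2) - (R τ)^2) τ)
    (hR0 : 0 < R 0) (hΩ0 : (S 0)^2 + (R 0)^2 < 1) :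
    (∀ τ ∈ Ici (0:ℝ), 0 < R τ ∧ (S τ)^2 + (R τ)^2 < 1) ∧
    Tendsto S atTop (nhds 0) ∧ Tendsto R atTop (nhds 0) := by
  have hScont : ContinuousOn S (Ici 0) := fun τ hτ => (hSode τ hτ).continuousAt.continuousWithinAt
  have hΩ (τ) (hτ : τ ∈ Ici (0:ℝ)) : 0 < densityParameter R S τ :=
    pos_of_hasDerivAt_eq_mul (b := fun τ => 2 * S τ ^ 2) (continuousOn_const.mul (hScont.pow 2))
      (fun τ hτ => hasDerivAt_densityParameter (hRode τ hτ) (hSode τ hτ))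
      (by simp only [densityParameter]; linarith) hτ
  have hR (τ) (hτ : τ ∈ Ici (0:ℝ)) : 0 < R τ :=
    pos_of_hasDerivAt_eq_mul (hScont.mul (continuousOn_const.add hScont)) hRode hR0 hτ
  have hS := tendsto_S_atTop_zero hRode hSode hΩ
  have hR2 : Tendsto (fun τ => R τ ^ 2) atTop (𝓝 0) := by
    convert (tendsto_const_nhds (x := (1:ℝ))).sub (hS.pow 2) |>.sub
      (tendsto_densityParameter_atTop_one hRode hSode hΩ) using 1
    · ext τ
      simp only [densityParameter]
      ring
    · norm_num
  refine ⟨fun τ hτ => ⟨hR τ hτ, ?_⟩, hS, tendsto_zero_of_sq_tendsto_zero hR2⟩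
  have := hΩ τ hτ
  simp only [densityParameter] at this
  linarith
end

section
/- Let y solve y' = -y³ + ε e^{-γτ}, y(0) = y₀ > 0, and let c = 1/(2y₀²) - ε ∫₀^∞ e^{-γs}/y(s)³ ds. Then w(τ) - c = ε ∫_τ^∞ e^{-γs}/y(s)³ ds ≤ ε ∫_τ^∞ e^{-γs}(2s + 1/y₀²)^{3/2} ds for all τ ≥ 0, where w(τ) = 1/(2y(τ)²) - τ. -/
/-! Along the flow, `w(τ) = 1/(2y²) - τ` has derivative `-ε e^{-γτ}/y³ ≤ 0`. Integrating `w'` over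
`[0, τ]` and splitting `∫₀^∞ = ∫₀^τ + ∫_τ^∞` gives the identity. Since `w` is antitone,
`w(s) ≤ w(0)`, i.e. `1/y(s)² ≤ 2s + 1/y₀²`, hence `1/y(s)³ ≤ (2s + 1/y₀²)^{3/2}`. The majorant
`e^{-γs}(2s + 1/y₀²)^{3/2}` decays exponentially, so it is integrable, and by domination so is
`e^{-γs}/y(s)³`; without this the Bochner integrals in the identity would be junk zeros. -/

open MeasureTheory Filter Set Real Asymptotics

theorem one_div_pow_three_le_rpow_of_one_div_sq_le {x b : ℝ} (hx : 0 < x) (h : 1 / x ^ 2 ≤ b) :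
    1 / x ^ 3 ≤ b ^ ((3 : ℝ) / 2) :=
  calc 1 / x ^ 3 = (1 / x ^ 2) ^ ((3 : ℝ) / 2) := by
        rw [← one_div_pow, ← one_div_pow, ← Real.rpow_natCast_mul (by positivity)]
        norm_num
    _ ≤ b ^ ((3 : ℝ) / 2) := by gcongr

theorem integrableOn_Ioi_exp_neg_mul_mul_rpow {γ k p : ℝ} (hγ : 0 < γ) (hk : 0 < k)
    (hp : 0 ≤ p) (a c : ℝ) :
    IntegrableOn (fun s => exp (-γ * s) * (k * s + c) ^ p) (Ioi a) := by
  refine integrable_of_isBigO_exp_neg (half_pos hγ) (by fun_prop (disch := assumption)) ?_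
  have hpoly : (fun s => (k * s + c) ^ p) =o[atTop] fun s => exp (γ / (2 * k) * (k * s + c)) :=
    (isLittleO_rpow_exp_pos_mul_atTop p (by positivity)).comp_tendsto
      (tendsto_atTop_add_const_right _ c (tendsto_id.const_mul_atTop hk))
  have hexp : (fun s => exp (-γ * s) * exp (γ / (2 * k) * (k * s + c)))
      = fun s => exp (γ * c / (2 * k)) * exp (-(γ / 2) * s) := by
    funext s
    rw [← exp_add, ← exp_add]
    congr 1
    field_simp
    ring
  refine ((isBigO_refl (fun s => exp (-γ * s)) atTop).mul hpoly.isBigO).trans ?_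
  rw [hexp]
  exact (isBigO_refl _ _).const_mul_left _

theorem IntegrableOn.mono_of_nonneg_of_le {α : Type*} [MeasurableSpace α] {μ : Measure α}
    {f g : α → ℝ} {s : Set α} (hg : IntegrableOn g s μ) (hs : MeasurableSet s)
    (hfm : AEStronglyMeasurable f (μ.restrict s)) (h0 : ∀ x ∈ s, 0 ≤ f x)
    (hle : ∀ x ∈ s, f x ≤ g x) : IntegrableOn f s μ := by
  refine hg.mono' hfm ?_
  filter_upwards [ae_restrict_mem hs] with x hx
  rw [Real.norm_of_nonneg (h0 x hx)]
  exact hle x hx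

theorem integral_Ioi_eq_sub_add_integral_Ioi {F f : ℝ → ℝ} {a b : ℝ} (hab : a ≤ b)
    (hF : ∀ t ∈ Icc a b, HasDerivAt F (-f t) t) (hf : IntegrableOn f (Ioi a)) :
    ∫ s in Ioi a, f s = F a - F b + ∫ s in Ioi b, f s := by
  have hfab : IntervalIntegrable f volume a b :=
    (intervalIntegrable_iff_integrableOn_Ioc_of_le hab).2 (hf.mono_set Ioc_subset_Ioi_self)
  have hFTC : ∫ s in a..b, -f s = F b - F a :=
    intervalIntegral.integral_eq_sub_of_hasDerivAt (by rwa [uIcc_of_le hab]) hfab.neg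
  rw [← intervalIntegral.integral_interval_add_Ioi hf (hf.mono_set (Ioi_subset_Ioi hab))]
  rw [intervalIntegral.integral_neg] at hFTC
  linarith

section CubicDecay

variable {y : ℝ → ℝ}

theorem HasDerivAt.one_div_two_mul_sq_sub_id {b t : ℝ} (hy : y t ≠ 0)
    (h : HasDerivAt y (-y t ^ 3 + b) t) :
    HasDerivAt (fun t => 1 / (2 * y t ^ 2) - t) (-(b / y t ^ 3)) t := by
  refine (((hasDerivAt_const t (1 : ℝ)).fun_div ((h.fun_pow 2).const_mul 2)
    (by positivity)).fun_sub (hasDerivAt_id' t)).congr_deriv ?_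
  field_simp
  ring

variable {g : ℝ → ℝ} {a : ℝ}

theorem antitoneOn_one_div_two_mul_sq_sub_id (hpos : ∀ t ∈ Ici a, 0 < y t)
    (hode : ∀ t ∈ Ici a, HasDerivAt y (-y t ^ 3 + g t) t) (hg : ∀ t ∈ Ici a, 0 ≤ g t) :
    AntitoneOn (fun t => 1 / (2 * y t ^ 2) - t) (Ici a) := by
  have hw : ∀ t ∈ Ici a, HasDerivAt (fun t => 1 / (2 * y t ^ 2) - t) (-(g t / y t ^ 3)) t :=
    fun t ht => (hode t ht).one_div_two_mul_sq_sub_id (hpos t ht).ne'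
  refine antitoneOn_of_hasDerivWithinAt_nonpos (convex_Ici a)
    (fun t ht => (hw t ht).continuousAt.continuousWithinAt)
    (fun t ht => (hw t (interior_subset ht)).hasDerivWithinAt) fun t ht => ?_
  have ht := interior_subset ht
  exact neg_nonpos.2 (div_nonneg (hg t ht) (pow_pos (hpos t ht) 3).le)

theorem one_div_sq_le_two_mul_sub_add (hpos : ∀ t ∈ Ici a, 0 < y t)
    (hode : ∀ t ∈ Ici a, HasDerivAt y (-y t ^ 3 + g t) t) (hg : ∀ t ∈ Ici a, 0 ≤ g t) {s : ℝ}
    (hs : a ≤ s) :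
    1 / y s ^ 2 ≤ 2 * (s - a) + 1 / y a ^ 2 := by
  have hw := antitoneOn_one_div_two_mul_sq_sub_id hpos hode hg self_mem_Ici hs hs
  have half : ∀ x : ℝ, 1 / (2 * x) = 1 / x / 2 := fun x => by rw [div_div, mul_comm]
  simp only [half] at hw
  linarith

end CubicDecay

theorem w_minus_c_integral_bound_general (ε γ y₀ : ℝ) (hε : 0 < ε) (hγ : 0 < γ)
    (y : ℝ → ℝ) (hy0 : y 0 = y₀)
    (hpos : ∀ τ ∈ Ici (0:ℝ), 0 < y τ)
    (hode : ∀ τ ∈ Ici (0:ℝ), HasDerivAt y (-(y τ)^3 + ε * Real.exp (-γ * τ)) τ) :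
    ∀ τ ∈ Ici (0:ℝ),
      (1 / (2 * (y τ)^2) - τ) -
          (1 / (2 * y₀^2) - ε * ∫ s in Ioi (0:ℝ), Real.exp (-γ * s) / (y s)^3)
        = ε * ∫ s in Ioi τ, Real.exp (-γ * s) / (y s)^3 ∧
      ε * ∫ s in Ioi τ, Real.exp (-γ * s) / (y s)^3
        ≤ ε * ∫ s in Ioi τ, Real.exp (-γ * s) * (2 * s + 1 / y₀^2) ^ ((3:ℝ)/2) := by
  set f : ℝ → ℝ := fun s => exp (-γ * s) / y s ^ 3
  set g : ℝ → ℝ := fun s => exp (-γ * s) * (2 * s + 1 / y₀ ^ 2) ^ ((3 : ℝ) / 2)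
  have hw (t : ℝ) (ht : t ∈ Ici 0) :
      HasDerivAt (fun t => 1 / (2 * y t ^ 2) - t) (-(ε * f t)) t := by
    simpa only [mul_div_assoc] using (hode t ht).one_div_two_mul_sq_sub_id (hpos t ht).ne'
  have hfg (s : ℝ) (hs : s ∈ Ici 0) : f s ≤ g s := by
    have hsq := one_div_sq_le_two_mul_sub_add hpos hode (fun t _ => by positivity) hs
    rw [sub_zero, hy0] at hsq
    calc f s = exp (-γ * s) * (1 / y s ^ 3) := (mul_one_div _ _).symm
      _ ≤ g s := mul_le_mul_of_nonneg_left
        (one_div_pow_three_le_rpow_of_one_div_sq_le (hpos s hs) hsq) (exp_pos _).le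
  have hg (a : ℝ) : IntegrableOn g (Ioi a) :=
    integrableOn_Ioi_exp_neg_mul_mul_rpow hγ two_pos (by norm_num) a _
  have hcont : ContinuousOn f (Ioi 0) := fun t ht =>
    ((continuous_exp.comp (continuous_const_mul _)).continuousAt.div
      ((hode t ht.out.le).continuousAt.pow 3) (pow_pos (hpos t ht.out.le) 3).ne').continuousWithinAt
  have hf : IntegrableOn f (Ioi 0) :=
    IntegrableOn.mono_of_nonneg_of_le (hg 0) measurableSet_Ioi
      (hcont.aestronglyMeasurable measurableSet_Ioi)
      (fun s hs => div_nonneg (exp_pos _).le (pow_pos (hpos s hs.out.le) 3).le)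
      fun s hs => hfg s hs.out.le
  intro τ hτ
  constructor
  · have hsplit := integral_Ioi_eq_sub_add_integral_Ioi hτ (fun t ht => hw t ht.1)
      (hf.const_mul ε)
    rw [integral_const_mul, integral_const_mul, hy0] at hsplit
    linarith
  · exact mul_le_mul_of_nonneg_left (setIntegral_mono_on
      (hf.mono_set (Ioi_subset_Ioi hτ)) (hg τ) measurableSet_Ioi
      fun s hs => hfg s (hτ.out.trans hs.out.le)) hε.le

/-- For a positive solution of `y' = -y³ + ε e^{-γτ}` with `y(0) = y₀ > 0` and
`c = 1/(2y₀²) - ε ∫₀^∞ e^{-γs}/y(s)³ ds`, one has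
`w(τ) - c = ε ∫_τ^∞ e^{-γs}/y(s)³ ds ≤ ε ∫_τ^∞ e^{-γs}(2s + 1/y₀²)^{3/2} ds`
for all `τ ≥ 0`, where `w(τ) = 1/(2y(τ)²) - τ`. -/
theorem w_minus_c_integral_bound (ε γ y₀ : ℝ) (hε : 0 < ε) (hγ : 0 < γ)
    (hy₀ : 0 < y₀) (y : ℝ → ℝ) (hy0 : y 0 = y₀)
    (hpos : ∀ τ ∈ Ici (0:ℝ), 0 < y τ)
    (hode : ∀ τ ∈ Ici (0:ℝ), HasDerivAt y (-(y τ)^3 + ε * Real.exp (-γ * τ)) τ) :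
    ∀ τ ∈ Ici (0:ℝ),
      (1 / (2 * (y τ)^2) - τ) -
          (1 / (2 * y₀^2) - ε * ∫ s in Ioi (0:ℝ), Real.exp (-γ * s) / (y s)^3)
        = ε * ∫ s in Ioi τ, Real.exp (-γ * s) / (y s)^3 ∧
      ε * ∫ s in Ioi τ, Real.exp (-γ * s) / (y s)^3
        ≤ ε * ∫ s in Ioi τ, Real.exp (-γ * s) * (2 * s + 1 / y₀^2) ^ ((3:ℝ)/2) :=
  w_minus_c_integral_bound_general ε γ y₀ hε hγ y hy0 hpos hode
end
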